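/- arXiv:2308.11350 — 11 statements merged into one kernel-verified Lean document; each statement's English description precedes it below -/
import Mathlib

section
/- If A ≤₁ B for nonempty subsets A, B of a bounded poset with ACC, then B⁰ ≤₁ A⁰; in particular a ≤ b implies b⁰ ≤₁ a⁰. -/
variable {P : Type*}

/-- lower cone of two elements -/
def LC [PartialOrder P] (a b : P) : Set P := {z | z ≤ a ∧ z ≤ b}

/-- set of maximal elements of a subset -/
def MaxS [PartialOrder P] (A : Set P) : Set P := {m | m ∈ A ∧ ∀ y ∈ A, m ≤ y → m = y}

/-- A ≤₁ B -/
def leq1 [PartialOrder P] (A B : Set P) : Prop := ∀ x ∈ A, ∃ y ∈ B, x ≤ y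

/-- A =₁ B -/
def eq1 [PartialOrder P] (A B : Set P) : Prop := leq1 A B ∧ leq1 B A

/-- Λ(A,B) -/
def Lam [PartialOrder P] (A B : Set P) : Set P := ⋃ x ∈ A, ⋃ y ∈ B, LC x y

/-- unsharp negation of a subset -/
def neg0 [PartialOrder P] [OrderBot P] (A : Set P) : Set P :=
  MaxS {x | ∀ y ∈ A, LC x y = {⊥}}

/-- unsharp implication of two elements -/
def uimpl [PartialOrder P] (a b : P) : Set P :=
  MaxS {x | ∀ z ∈ LC a x, z ≤ b}

/-- unsharp implication with a subset in the first entry -/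
def uimplS [PartialOrder P] (A : Set P) (b : P) : Set P :=
  MaxS {y | ∀ x ∈ A, ∀ z ∈ LC x y, z ≤ b}

/-- unsharp conjunction of subsets -/
def odot [PartialOrder P] (A B : Set P) : Set P := MaxS (Lam A B)

/-- A ≤₁ B implies B⁰ ≤₁ A⁰. -/
theorem stmt5 [PartialOrder P] [OrderBot P] [OrderTop P]
    (hacc : ∀ A : Set P, ∀ x ∈ A, ∃ m ∈ MaxS A, x ≤ m) :
    (∀ A B : Set P, A.Nonempty → B.Nonempty → leq1 A B → leq1 (neg0 B) (neg0 A)) ∧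
    (∀ a b : P, a ≤ b → leq1 (neg0 {b}) (neg0 {a})) := by
  have main : ∀ A B : Set P, leq1 A B → leq1 (neg0 B) (neg0 A) := by
    intro A B hAB x hx
    have hxS : x ∈ {x : P | ∀ y ∈ A, LC x y = {⊥}} := by
      intro y hy
      obtain ⟨b, hb, hyb⟩ := hAB y hy
      apply Set.eq_singleton_iff_unique_mem.mpr
      constructor
      · exact ⟨bot_le, bot_le⟩
      · intro z hz
        have hzb : z ∈ LC x b := ⟨hz.1, le_trans hz.2 hyb⟩
        have hxb := hx.1 b hb
        rw [hxb] at hzb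
        exact hzb
    obtain ⟨m, hm, hxm⟩ := hacc _ x hxS
    exact ⟨m, hm, hxm⟩
  exact ⟨fun A B _ _ h => main A B h,
    fun a b hab => main {a} {b} (fun x hx => ⟨b, rfl, hx ▸ hab⟩)⟩
end

section
/- For every nonempty subset A of a bounded poset with ACC, A ≤₁ A⁰⁰ and A⁰⁰⁰ = A⁰; in particular a ≤₁ a⁰⁰ and a⁰⁰⁰ = a⁰ for each element a. -/
variable {P : Type*}

def Sset [PartialOrder P] [OrderBot P] (A : Set P) : Set P := {x | ∀ y ∈ A, LC x y = {⊥}}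

lemma neg0_eq [PartialOrder P] [OrderBot P] (A : Set P) : neg0 A = MaxS (Sset A) := rfl

lemma lc_eq_iff [PartialOrder P] [OrderBot P] {x y : P} :
    LC x y = {⊥} ↔ ∀ z, z ≤ x → z ≤ y → z = ⊥ := by
  constructor
  · intro h z hzx hzy
    have : z ∈ LC x y := ⟨hzx, hzy⟩
    rw [h] at this; exact this
  · intro h; ext z
    simp only [Set.mem_singleton_iff, LC, Set.mem_setOf_eq]
    constructor
    · rintro ⟨h1, h2⟩; exact h z h1 h2
    · rintro rfl; exact ⟨bot_le, bot_le⟩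

lemma lc_comm [PartialOrder P] (a b : P) : LC a b = LC b a := by
  ext z; exact and_comm

lemma Sset_antitone [PartialOrder P] [OrderBot P] {A B : Set P} (h : leq1 A B) :
    Sset B ⊆ Sset A := by
  intro x hx a ha
  obtain ⟨b, hb, hab⟩ := h a ha
  rw [lc_eq_iff]
  intro z hzx hza
  have := hx b hb
  rw [lc_eq_iff] at this
  exact this z hzx (hza.trans hab)

lemma leq1_neg2 [PartialOrder P] [OrderBot P]
    (hacc : ∀ A : Set P, ∀ x ∈ A, ∃ m ∈ MaxS A, x ≤ m) (A : Set P) :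
    leq1 A (neg0 (neg0 A)) := by
  intro a ha
  have hmem : a ∈ Sset (neg0 A) := by
    intro y hy
    rw [lc_comm]
    exact hy.1 a ha
  obtain ⟨m, hm, ham⟩ := hacc (Sset (neg0 A)) a hmem
  exact ⟨m, hm, ham⟩

lemma Sset_neg2 [PartialOrder P] [OrderBot P]
    (hacc : ∀ A : Set P, ∀ x ∈ A, ∃ m ∈ MaxS A, x ≤ m) (A : Set P) :
    Sset (neg0 (neg0 A)) = Sset A := by
  apply Set.Subset.antisymm
  · exact Sset_antitone (leq1_neg2 hacc A)
  · intro x hx y hy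
    obtain ⟨m, hm, hxm⟩ := hacc (Sset A) x hx
    rw [lc_eq_iff]
    intro z hzx hzy
    have hy' : y ∈ Sset (neg0 A) := hy.1
    have := hy' m hm
    rw [lc_eq_iff] at this
    exact this z (hzy) (hzx.trans hxm)

/-- A ≤₁ A⁰⁰ and A⁰⁰⁰ = A⁰. -/
theorem stmt7 [PartialOrder P] [OrderBot P] [OrderTop P]
    (hacc : ∀ A : Set P, ∀ x ∈ A, ∃ m ∈ MaxS A, x ≤ m) :
    (∀ A : Set P, A.Nonempty → leq1 A (neg0 (neg0 A))) ∧
    (∀ A : Set P, A.Nonempty → neg0 (neg0 (neg0 A)) = neg0 A) ∧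
    (∀ a : P, leq1 {a} (neg0 (neg0 {a}))) ∧
    (∀ a : P, neg0 (neg0 (neg0 {a})) = neg0 {a}) := by
  refine ⟨fun A _ => leq1_neg2 hacc A, fun A _ => ?_, fun a => leq1_neg2 hacc {a},
    fun a => ?_⟩ <;>
  · show MaxS (Sset (neg0 (neg0 _))) = MaxS (Sset _)
    rw [Sset_neg2 hacc]
end

section
/- For elements a, b of a bounded poset with ACC, Λ(a, (L(a,b))⁰) =₁ Λ(a, b⁰), where Λ(A,B) is the union of lower cones L(x,y) over x ∈ A, y ∈ B. -/
variable {P : Type*}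

/-- Λ(a,(L(a,b))⁰) =₁ Λ(a,b⁰). -/
theorem stmt8 [PartialOrder P] [OrderBot P] [OrderTop P]
    (hacc : ∀ A : Set P, ∀ x ∈ A, ∃ m ∈ MaxS A, x ≤ m) (a b : P) :
    eq1 (Lam {a} (neg0 (LC a b))) (Lam {a} (neg0 {b})) := by
  constructor
  · rintro z hz
    simp only [Lam, Set.mem_iUnion, Set.mem_singleton_iff, exists_prop] at hz
    obtain ⟨x, rfl, y, hy, hz1, hz2⟩ := hz
    have hzset : z ∈ {x : P | ∀ t ∈ ({b} : Set P), LC x t = {⊥}} := by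
      intro t ht
      have ht' : t = b := ht
      rw [ht']
      ext w
      constructor
      · rintro ⟨hw1, hw2⟩
        have hwab : w ∈ LC x b := ⟨hw1.trans hz1, hw2⟩
        have heq := hy.1 w hwab
        have hmem : w ∈ LC y w := ⟨hw1.trans hz2, le_refl w⟩
        rw [heq] at hmem
        exact hmem
      · rintro rfl
        exact ⟨bot_le, bot_le⟩
    obtain ⟨m, hm, hzm⟩ := hacc _ z hzset
    refine ⟨z, ?_, le_refl z⟩
    simp only [Lam, Set.mem_iUnion, Set.mem_singleton_iff, exists_prop]
    exact ⟨x, rfl, m, hm, hz1, hzm⟩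
  · rintro z hz
    simp only [Lam, Set.mem_iUnion, Set.mem_singleton_iff, exists_prop] at hz
    obtain ⟨x, rfl, y, hy, hz1, hz2⟩ := hz
    have hzset : z ∈ {w0 : P | ∀ t ∈ LC x b, LC w0 t = {⊥}} := by
      intro t ht
      ext w
      constructor
      · rintro ⟨hw1, hw2⟩
        have heq := hy.1 b rfl
        have hmem : w ∈ LC y b := ⟨hw1.trans hz2, hw2.trans ht.2⟩
        rw [heq] at hmem
        exact hmem
      · rintro rfl
        exact ⟨bot_le, bot_le⟩
    obtain ⟨m, hm, hzm⟩ := hacc _ z hzset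
    refine ⟨z, ?_, le_refl z⟩
    simp only [Lam, Set.mem_iUnion, Set.mem_singleton_iff, exists_prop]
    exact ⟨x, rfl, m, hm, hz1, hzm⟩
end

section
/- A unary operator x ↦ x⁰ on a bounded poset with ACC equals x ↦ Max{y | L(x,y) = {0}} if and only if for all x: (P1) x⁰ is an antichain, (P2) L(x,y) = {0} for all y ∈ x⁰, and (P3) Λ(x, (L(x,y))⁰) =₁ Λ(x, y⁰) for all y, where the operator is extended to subsets A by A⁰ := Max{z | L(z,w) = {0} for all w ∈ A}. -/
variable {P : Type*}

set_option linter.unusedSectionVars false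

section Helpers
variable [PartialOrder P] [OrderBot P]

lemma LC_comm (a b : P) : LC a b = LC b a := by
  ext z; exact ⟨fun h => ⟨h.2, h.1⟩, fun h => ⟨h.2, h.1⟩⟩

lemma LC_eq_bot_iff {a b : P} : LC a b = {⊥} ↔ ∀ z : P, z ≤ a → z ≤ b → z = ⊥ := by
  constructor
  · intro h z h1 h2
    have : z ∈ LC a b := ⟨h1, h2⟩
    rwa [h] at this
  · intro h
    ext z
    simp only [LC, Set.mem_setOf_eq, Set.mem_singleton_iff]
    exact ⟨fun ⟨h1, h2⟩ => h z h1 h2, fun hz => hz ▸ ⟨bot_le, bot_le⟩⟩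

lemma maxS_antichain (A : Set P) : IsAntichain (· ≤ ·) (MaxS A) :=
  fun _ ha _ hb hne hle => hne (ha.2 _ hb.1 hle)

lemma mem_Lam_singleton {x : P} {B : Set P} {u : P} :
    u ∈ Lam {x} B ↔ u ≤ x ∧ ∃ b ∈ B, u ≤ b := by
  simp only [Lam, Set.mem_iUnion, Set.mem_singleton_iff, LC, Set.mem_setOf_eq]
  constructor
  · rintro ⟨a, rfl, b, hb, h1, h2⟩; exact ⟨h1, b, hb, h2⟩
  · rintro ⟨h1, b, hb, h2⟩; exact ⟨x, rfl, b, hb, h1, h2⟩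

end Helpers

/-- characterization of the unsharp negation operator. -/
theorem stmt9 [PartialOrder P] [OrderBot P] [OrderTop P]
    (hacc : ∀ A : Set P, ∀ x ∈ A, ∃ m ∈ MaxS A, x ≤ m) (n : P → Set P) :
    (∀ x : P, n x = MaxS {y | LC x y = {⊥}}) ↔
    (∀ x : P,
      IsAntichain (· ≤ ·) (n x) ∧
      (∀ y ∈ n x, LC x y = {⊥}) ∧
      (∀ y : P, eq1 (Lam {x} (neg0 (LC x y))) (Lam {x} (n y)))) := by
  constructor
  · intro h x
    refine ⟨?_, ?_, ?_⟩
    · rw [h x]; exact maxS_antichain _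
    · intro y hy; rw [h x] at hy; exact hy.1
    · intro y
      rw [h y]
      constructor
      · intro u hu
        obtain ⟨hux, z, hz, huz⟩ := mem_Lam_singleton.mp hu
        have hu' : u ∈ {t : P | LC y t = {⊥}} := by
          refine LC_eq_bot_iff.mpr fun v hvy hvu => ?_
          have hv : v ∈ LC x y := ⟨hvu.trans hux, hvy⟩
          have := hz.1 v hv
          have hmem : v ∈ LC z v := ⟨hvu.trans huz, le_refl v⟩
          rwa [this] at hmem
        obtain ⟨m, hm, hum⟩ := hacc _ u hu'
        exact ⟨u, mem_Lam_singleton.mpr ⟨hux, m, hm, hum⟩, le_refl u⟩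
      · intro u hu
        obtain ⟨hux, z, hz, huz⟩ := mem_Lam_singleton.mp hu
        have hu' : u ∈ {t : P | ∀ w ∈ LC x y, LC t w = {⊥}} := by
          intro w hw
          refine LC_eq_bot_iff.mpr fun s hsu hsw => ?_
          have hs : s ∈ LC y z := ⟨hsw.trans hw.2, hsu.trans huz⟩
          rwa [hz.1] at hs
        obtain ⟨m, hm, hum⟩ := hacc _ u hu'
        exact ⟨u, mem_Lam_singleton.mpr ⟨hux, m, hm, hum⟩, le_refl u⟩
  · intro h x
    have hkey : neg0 (LC ⊤ x) = MaxS {y : P | LC x y = {⊥}} := by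
      have : {t : P | ∀ w ∈ LC ⊤ x, LC t w = {⊥}} = {y : P | LC x y = {⊥}} := by
        ext t
        simp only [Set.mem_setOf_eq]
        constructor
        · intro ht
          rw [LC_comm]
          exact ht x ⟨le_top, le_refl x⟩
        · intro ht w hw
          refine LC_eq_bot_iff.mpr fun s hst hsw => ?_
          have : s ∈ LC x t := ⟨hsw.trans hw.2, hst⟩
          rwa [ht] at this
      rw [neg0, this]
    have h3 := (h ⊤).2.2 x
    rw [hkey] at h3
    have hsub : MaxS {y : P | LC x y = {⊥}} ⊆ n x := by
      intro m hm
      obtain ⟨v, hv, hmv⟩ := h3.1 m (mem_Lam_singleton.mpr ⟨le_top, m, hm, le_refl m⟩)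
      obtain ⟨-, a, ha, hva⟩ := mem_Lam_singleton.mp hv
      have hma : m ≤ a := hmv.trans hva
      have : a ∈ {y : P | LC x y = {⊥}} := (h x).2.1 a ha
      have := hm.2 a this hma
      exact this ▸ ha
    apply Set.Subset.antisymm
    · intro a ha
      obtain ⟨v, hv, hav⟩ := h3.2 a (mem_Lam_singleton.mpr ⟨le_top, a, ha, le_refl a⟩)
      obtain ⟨-, m, hm, hvm⟩ := mem_Lam_singleton.mp hv
      have ham : a ≤ m := hav.trans hvm
      by_cases heq : a = m
      · exact heq ▸ hm
      · exact absurd ham ((h x).1 ha (hsub hm) heq)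
    · exact hsub
end

section
/- For elements a, b of a bounded poset with ACC, a ≤₁ (a → b) → b, where A → b := Max{y | for all x ∈ A, every element of L(x,y) is ≤ b}. -/
variable {P : Type*}

/-- a ≤₁ (a → b) → b. -/
theorem stmt11 [PartialOrder P] [OrderBot P] [OrderTop P]
    (hacc : ∀ A : Set P, ∀ x ∈ A, ∃ m ∈ MaxS A, x ≤ m) (a b : P) :
    leq1 {a} (uimplS (uimpl a b) b) := by
  intro t ht
  rw [Set.mem_singleton_iff] at ht; subst ht
  have ha : t ∈ {y | ∀ x ∈ uimpl t b, ∀ z ∈ LC x y, z ≤ b} := by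
    intro x hx z hz
    exact hx.1 z ⟨hz.2, hz.1⟩
  obtain ⟨m, hm, ham⟩ := hacc _ t ha
  exact ⟨m, hm, ham⟩
end

section
/- In a bounded poset with ACC, if a ≤ b then c → a ≤₁ c → b and b → c ≤₁ a → c for all c. -/
variable {P : Type*}

/-- a ≤ b implies c → a ≤₁ c → b and b → c ≤₁ a → c. -/
theorem stmt12 [PartialOrder P] [OrderBot P] [OrderTop P]
    (hacc : ∀ A : Set P, ∀ x ∈ A, ∃ m ∈ MaxS A, x ≤ m) (a b : P) (hab : a ≤ b) (c : P) :
    leq1 (uimpl c a) (uimpl c b) ∧ leq1 (uimpl b c) (uimpl a c) := by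
  constructor
  · intro x hx
    have hxb : x ∈ {x | ∀ z ∈ LC c x, z ≤ b} := fun z hz => (hx.1 z hz).trans hab
    obtain ⟨m, hm, hxm⟩ := hacc _ x hxb
    exact ⟨m, hm, hxm⟩
  · intro x hx
    have hxa : x ∈ {y | ∀ z ∈ LC a y, z ≤ c} :=
      fun z hz => hx.1 z ⟨hz.1.trans hab, hz.2⟩
    obtain ⟨m, hm, hxm⟩ := hacc _ x hxa
    exact ⟨m, hm, hxm⟩
end

section
/- In a bounded poset with ACC, Λ(a, a → b) = L(a,b) for all elements a, b. -/
variable {P : Type*}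

/-- Λ(a, a → b) = L(a,b). -/
theorem stmt13 [PartialOrder P] [OrderBot P] [OrderTop P]
    (hacc : ∀ A : Set P, ∀ x ∈ A, ∃ m ∈ MaxS A, x ≤ m) (a b : P) :
    Lam {a} (uimpl a b) = LC a b := by
  ext z
  simp only [Lam, Set.mem_iUnion, Set.mem_singleton_iff, exists_prop, exists_eq_left]
  constructor
  · rintro ⟨y, hy, hza, hzy⟩
    exact ⟨hza, hy.1 z ⟨hza, hzy⟩⟩
  · rintro ⟨hza, hzb⟩
    have hz : z ∈ {x : P | ∀ w ∈ LC a x, w ≤ b} := fun w hw => hw.2.trans hzb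
    obtain ⟨m, hm, hzm⟩ := hacc _ z hz
    exact ⟨m, hm, hza, hzm⟩
end

section
/- In a bounded poset with ACC, Λ(a → b, b) =₁ {b} for all elements a, b. -/
variable {P : Type*}

/-- Λ(a → b, b) =₁ {b}. -/
theorem stmt14 [PartialOrder P] [OrderBot P] [OrderTop P]
    (hacc : ∀ A : Set P, ∀ x ∈ A, ∃ m ∈ MaxS A, x ≤ m) (a b : P) :
    eq1 (Lam (uimpl a b) {b}) {b} := by
  constructor
  · intro z hz
    simp only [Lam, Set.mem_iUnion, Set.mem_singleton_iff] at hz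
    obtain ⟨x, hx, y, hy, hz1, hz2⟩ := hz
    exact ⟨b, rfl, hy ▸ hz2⟩
  · intro z hz
    rw [Set.mem_singleton_iff] at hz
    subst hz
    obtain ⟨m, hm, hbm⟩ := hacc {x | ∀ w ∈ LC a x, w ≤ z} z (fun w hw => hw.2)
    refine ⟨z, ?_, le_refl z⟩
    simp only [Lam, Set.mem_iUnion]
    exact ⟨m, hm, z, rfl, hbm, le_refl z⟩
end

section
/- Adjointness holds in a bounded poset with ACC: for a nonempty subset A and elements b, c, A ⊙ b ≤ c (every element of Max Λ(A,{b}) is ≤ c) if and only if A ≤₁ b → c. -/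
variable {P : Type*}

/-- adjointness of ⊙ and →. -/
theorem stmt16 [PartialOrder P] [OrderBot P] [OrderTop P]
    (hacc : ∀ A : Set P, ∀ x ∈ A, ∃ m ∈ MaxS A, x ≤ m) (A : Set P) (hA : A.Nonempty) (b c : P) :
    (∀ z ∈ odot A {b}, z ≤ c) ↔ leq1 A (uimpl b c) := by
  constructor
  · intro h x hx
    have hxS : x ∈ {y : P | ∀ z ∈ LC b y, z ≤ c} := by
      intro z hz
      have hzL : z ∈ Lam A {b} := by
        simp only [Lam, Set.mem_iUnion]
        exact ⟨x, hx, b, rfl, hz.2, hz.1⟩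
      obtain ⟨m, hm, hzm⟩ := hacc _ _ hzL
      exact le_trans hzm (h m hm)
    obtain ⟨y, hy, hxy⟩ := hacc _ _ hxS
    exact ⟨y, hy, hxy⟩
  · intro h z hz
    obtain ⟨x, hx, w, hw, hzx, hzw⟩ := by
      simpa only [Lam, Set.mem_iUnion] using hz.1
    obtain ⟨y, hy, hxy⟩ := h x hx
    rcases hw with rfl
    exact hy.1 z ⟨hzw, le_trans hzx hxy⟩
end

section
/- In a bounded poset with ACC, a ⊙ (a → b) = a ⊙ b for all elements a, b, where for subsets A ⊙ B := Max Λ(A,B) and a ⊙ b := Max L(a,b). -/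
variable {P : Type*}

/-- a ⊙ (a → b) = a ⊙ b. -/
theorem stmt17 [PartialOrder P] [OrderBot P] [OrderTop P]
    (hacc : ∀ A : Set P, ∀ x ∈ A, ∃ m ∈ MaxS A, x ≤ m) (a b : P) :
    odot {a} (uimpl a b) = MaxS (LC a b) := by
  have hset : Lam {a} (uimpl a b) = LC a b := by
    ext z
    simp only [Lam, Set.mem_iUnion, Set.mem_singleton_iff, LC, Set.mem_setOf_eq]
    constructor
    · rintro ⟨x, rfl, y, hy, hza, hzy⟩
      obtain ⟨hy1, -⟩ := hy
      exact ⟨hza, hy1 z ⟨hza, hzy⟩⟩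
    · rintro ⟨hza, hzb⟩
      have hz : z ∈ {x : P | ∀ w ∈ LC a x, w ≤ b} := by
        intro w hw
        exact hw.2.trans hzb
      obtain ⟨m, hm, hzm⟩ := hacc _ z hz
      exact ⟨a, rfl, m, hm, hza, hzm⟩
  unfold odot
  rw [hset]
end

section
/- A binary operator → on a bounded poset with ACC equals (x,y) ↦ Max{z | L(x,z) ≤ y} if and only if for all x,y,z: (R1) x → y is an antichain, (R2) L(x,z) ≤ y implies z ≤₁ x → y, and (R3) Λ(x, x → y) = L(x,y). -/
variable {P : Type*}

/-- characterization of the unsharp implication operator. -/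
theorem stmt18 [PartialOrder P] [OrderBot P] [OrderTop P]
    (hacc : ∀ A : Set P, ∀ x ∈ A, ∃ m ∈ MaxS A, x ≤ m) (imp : P → P → Set P) (hne : ∀ x y : P, (imp x y).Nonempty) :
    (∀ x y : P, imp x y = MaxS {z | ∀ w ∈ LC x z, w ≤ y}) ↔
    ((∀ x y : P, IsAntichain (· ≤ ·) (imp x y)) ∧
     (∀ x y z : P, (∀ w ∈ LC x z, w ≤ y) → ∃ u ∈ imp x y, z ≤ u) ∧
     (∀ x y : P, Lam {x} (imp x y) = LC x y)) := by
  constructor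
  · intro h
    refine ⟨?_, ?_, ?_⟩
    · intro x y a ha b hb hne hle
      rw [h] at ha hb
      exact hne (ha.2 b hb.1 hle)
    · intro x y z hz
      obtain ⟨m, hm, hzm⟩ := hacc {z | ∀ w ∈ LC x z, w ≤ y} z hz
      exact ⟨m, by rw [h]; exact hm, hzm⟩
    · intro x y
      ext w
      simp only [Lam, Set.mem_iUnion, Set.mem_singleton_iff, exists_prop]
      constructor
      · rintro ⟨a, rfl, m, hm, hwm⟩
        rw [h] at hm
        exact ⟨hwm.1, hm.1 w hwm⟩
      · rintro ⟨hwx, hwy⟩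
        have hwS : w ∈ {z | ∀ u ∈ LC x z, u ≤ y} := fun u hu => hu.2.trans hwy
        obtain ⟨m, hm, hwm⟩ := hacc _ w hwS
        exact ⟨x, rfl, m, by rw [h]; exact hm, hwx, hwm⟩
  · rintro ⟨h1, h2, h3⟩ x y
    have himpS : ∀ t ∈ imp x y, ∀ w ∈ LC x t, w ≤ y := by
      intro t ht w hw
      have : w ∈ Lam {x} (imp x y) := by
        simp only [Lam, Set.mem_iUnion, Set.mem_singleton_iff, exists_prop]
        exact ⟨x, rfl, t, ht, hw⟩
      rw [h3 x y] at this
      exact this.2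
    ext t
    constructor
    · intro ht
      refine ⟨himpS t ht, ?_⟩
      intro z hz htz
      obtain ⟨u, hu, hzu⟩ := h2 x y z hz
      have htu : t = u := by
        by_contra hne
        exact h1 x y ht hu hne (htz.trans hzu)
      exact le_antisymm htz (htu ▸ hzu)
    · rintro ⟨hm, hmax⟩
      obtain ⟨u, hu, hmu⟩ := h2 x y t hm
      have := hmax u (himpS u hu) hmu
      exact this ▸ hu
end
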